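/- arXiv:1707.06969 — 4 statements merged into one kernel-verified Lean document; each statement's English description precedes it below -/
import Mathlib

section
/- For ν > 0 and all z, w ∈ ℂ, ∑_{n=0}^∞ (z^n/n!) H_{n,m'}^ν(w, w̄) = ν^{m'} (w̄ - z)^{m'} e^{ν z w}. -/
open scoped Real
open MeasureTheory Complex

/-- The univariate complex Hermite polynomial
`H_{m,n}^ν(z, z̄) = (-1)^{m+n} e^{ν z z̄} ∂^{m+n}/(∂z̄^m ∂z^n)(e^{-ν z z̄})`,
given by its standard explicit closed form. -/
noncomputable def cHermite (ν : ℝ) (m n : ℕ) (z : ℂ) : ℂ :=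
  (m.factorial : ℂ) * (n.factorial : ℂ) *
    ∑ k ∈ Finset.range (min m n + 1),
      (-1 : ℂ) ^ k * (ν : ℂ) ^ (m + n - k) * z ^ (m - k) * (starRingEnd ℂ z) ^ (n - k) /
        ((k.factorial : ℂ) * ((m - k).factorial : ℂ) * ((n - k).factorial : ℂ))

/-!
With the closed form of `cHermite`, the `n`-th term `zⁿ/n! · H_{n,m'}(w)` is exactly the `n`-th
Cauchy-product coefficient of the binomial expansion of `(-νz + νw̄)^{m'}` (a finite series) with
the exponential series of `νzw`. Summing over `n` therefore gives the product of the two sums.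
-/

open Finset Nat ComplexConjugate

lemma pow_mul_pow_mul_choose_eq_zero_of_lt {R : Type*} [CommSemiring R] (x y : R) {m k : ℕ}
    (h : m < k) :
    x ^ k * y ^ (m - k) * (m.choose k : R) = 0 := by
  simp [Nat.choose_eq_zero_of_lt h]

lemma hasSum_pow_mul_pow_mul_choose {R : Type*} [CommSemiring R] [TopologicalSpace R]
    (x y : R) (m : ℕ) :
    HasSum (fun k ↦ x ^ k * y ^ (m - k) * (m.choose k : R)) ((x + y) ^ m) := by
  rw [add_pow]
  exact hasSum_sum_of_ne_finset_zero fun k hk ↦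
    pow_mul_pow_mul_choose_eq_zero_of_lt x y (by simpa using hk)

lemma pow_div_factorial_mul_cHermite (ν : ℝ) (n m : ℕ) (z w : ℂ) :
    z ^ n / n ! * cHermite ν n m w =
      ∑ k ∈ range (n + 1), (-(ν * z)) ^ k * (ν * conj w) ^ (m - k) * (m.choose k : ℂ) *
        ((ν * z * w) ^ (n - k) / (n - k)!) := by
  have hsub : range (min n m + 1) ⊆ range (n + 1) := range_subset_range.2 (by omega)
  rw [cHermite, mul_sum, mul_sum]
  refine Eq.trans (sum_congr rfl fun k hk ↦ ?_) (sum_subset hsub fun k hk hk' ↦ ?vanish)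
  case vanish =>
    simp only [mem_range] at hk hk'
    rw [pow_mul_pow_mul_choose_eq_zero_of_lt _ _ (by omega), zero_mul]
  simp only [mem_range] at hk
  obtain ⟨i, rfl⟩ := Nat.exists_eq_add_of_le (show k ≤ n by omega)
  obtain ⟨j, rfl⟩ := Nat.exists_eq_add_of_le (show k ≤ m by omega)
  rw [show k + i + (k + j) - k = k + i + j by omega, Nat.add_sub_cancel_left,
    Nat.add_sub_cancel_left, Nat.cast_add_choose]
  have hfac (p : ℕ) : (p ! : ℂ) ≠ 0 := Nat.cast_ne_zero.2 p.factorial_ne_zero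
  field_simp [hfac]
  ring

theorem cHermite_generating_function_one_index_general (ν : ℝ) (m' : ℕ) (z w : ℂ) :
    ∑' n : ℕ, z ^ n / (n.factorial : ℂ) * cHermite ν n m' w
      = (ν : ℂ) ^ m' * (starRingEnd ℂ w - z) ^ m' * Complex.exp ((ν : ℂ) * z * w) := by
  have hbinom := hasSum_pow_mul_pow_mul_choose (-(ν * z) : ℂ) (ν * conj w) m'
  have hbinom_norm :
      Summable fun k ↦ ‖(-(ν * z) : ℂ) ^ k * (ν * conj w) ^ (m' - k) * (m'.choose k : ℂ)‖ :=
    summable_of_ne_finset_zero (s := range (m' + 1)) fun k hk ↦ by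
      rw [pow_mul_pow_mul_choose_eq_zero_of_lt _ _ (by simpa using hk), norm_zero]
  have hexp := NormedSpace.expSeries_div_hasSum_exp ((ν : ℂ) * z * w)
  rw [tsum_congr (pow_div_factorial_mul_cHermite ν · m' z w),
    ← tsum_mul_tsum_eq_tsum_sum_range_of_summable_norm hbinom_norm
      (NormedSpace.norm_expSeries_div_summable _),
    hbinom.tsum_eq, hexp.tsum_eq, ← Complex.exp_eq_exp_ℂ,
    show -(ν * z) + ν * conj w = ν * (conj w - z) by ring, mul_pow]

theorem cHermite_generating_function_one_index (ν : ℝ) (hν : 0 < ν) (m' : ℕ) (z w : ℂ) :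
    ∑' n : ℕ, z ^ n / (n.factorial : ℂ) * cHermite ν n m' w
      = (ν : ℂ) ^ m' * (starRingEnd ℂ w - z) ^ m' * Complex.exp ((ν : ℂ) * z * w) :=
  cHermite_generating_function_one_index_general ν m' z w
end

section
/- For ν > 0, z ∈ ℂ, and real u with |u| < 1: ∑_{m,n=0}^∞ u^m |H_{m,n}^ν(z, z̄)|² / (ν^{m+n} m! n!) = e^{ν|z|²} / (1 - u). -/
open scoped Real
open MeasureTheory Complex

/-
Fix `m` and put `r = ν |z|²`. Expanding `|H_{m,n}|² = H_{m,n} · conj H_{m,n}` by the explicit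
formula writes `|H_{m,n}|² / (ν^{m+n} m! n!)` as a finite double sum over `k, l ≤ m` of signed
binomial multiples of `r^j / j!`, where `j = m + n - k - l`. For fixed `(k, l)` the series over `n`
is a shift of a series over `j`; regrouped by `j`, the coefficients of `r^j / j!` add up to `1`,
because the sum over `k` is an `m`-th forward difference of `x ↦ (x choose l)`, which vanishes
unless `l = m`. So every row sums to `e^r`, and the geometric series in `u` gives `e^r / (1 - u)`.
-/

open Finset Nat ComplexConjugate fwdDiff

theorem sum_range_neg_one_pow_mul_choose_mul_choose {n c : ℕ} (hc : c ≤ n) (y : ℕ) :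
    ∑ k ∈ range (n + 1), (-1 : ℤ) ^ k * n.choose k * (y + k).choose c =
      if n = c then (-1) ^ n else 0 := by
  have hΔ : (Δ_[1])^[n] (fun x ↦ x.choose c : ℕ → ℤ) y = if n = c then 1 else 0 := by
    have hc' : (Δ_[1])^[c] (fun x ↦ x.choose c : ℕ → ℤ) = fun _ ↦ 1 := by
      simpa using fwdDiff_iter_choose 0 c
    obtain ⟨d, rfl⟩ := Nat.exists_eq_add_of_le hc
    rcases d with _ | d
    · simp [hc']
    · rw [if_neg (by omega), add_comm, Function.iterate_add_apply, hc',
        Function.iterate_succ_apply]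
      simp [fwdDiff_iter_eq_sum_shift]
  rw [fwdDiff_iter_eq_sum_shift] at hΔ
  calc ∑ k ∈ range (n + 1), (-1 : ℤ) ^ k * n.choose k * (y + k).choose c
      = (-1) ^ n * ∑ k ∈ range (n + 1),
          ((-1 : ℤ) ^ (n - k) * n.choose k) • ((y + k • 1).choose c : ℤ) := by
        rw [mul_sum]
        refine sum_congr rfl fun k hk => ?_
        have hkn : k ≤ n := Nat.lt_succ_iff.mp (mem_range.mp hk)
        rw [smul_eq_mul, smul_eq_mul, mul_one, ← mul_assoc, ← mul_assoc, ← pow_add,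
          show n + (n - k) = k + 2 * (n - k) by omega, pow_add, pow_mul, neg_one_sq, one_pow,
          mul_one]
    _ = if n = c then (-1) ^ n else 0 := by rw [hΔ]; split_ifs <;> simp

/-- The coefficient of `r ^ j / j!` in the `(k, l)` term of `|H_{m,n}^ν|² / (ν^{m+n} m! n!)`,
`r = ν |z|²`, where `n = j + k + l - m`. -/
def degreeCoeff (m j k l : ℕ) : ℤ :=
  (-1) ^ (k + l) * (m.choose k * (j + k + l - m).choose l * j.choose (m - l) : ℕ)

theorem sum_degreeCoeff (m j : ℕ) :
    ∑ k ∈ range (m + 1), ∑ l ∈ range (m + 1), degreeCoeff m j k l = 1 := by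
  have hl : ∀ l ∈ range (m + 1), ∑ k ∈ range (m + 1), degreeCoeff m j k l =
      if l = m then 1 else 0 := by
    intro l hl
    have hlm : l ≤ m := Nat.lt_succ_iff.mp (mem_range.mp hl)
    by_cases hjl : m ≤ j + l
    · have hshift : ∀ k, j + k + l - m = (j + l - m) + k := fun k => by omega
      simp_rw [degreeCoeff, hshift, Nat.cast_mul, pow_add]
      calc ∑ k ∈ range (m + 1), (-1 : ℤ) ^ k * (-1) ^ l *
            (m.choose k * (j + l - m + k).choose l * j.choose (m - l))
          = (-1) ^ l * j.choose (m - l) *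
              ∑ k ∈ range (m + 1), (-1 : ℤ) ^ k * m.choose k * (j + l - m + k).choose l := by
            rw [mul_sum]; exact sum_congr rfl fun k _ => by ring
        _ = if l = m then 1 else 0 := by
            rw [sum_range_neg_one_pow_mul_choose_mul_choose hlm]
            by_cases h : l = m
            · subst h; simp [← pow_add, ← two_mul, pow_mul]
            · simp [h, Ne.symm h]
    · have hzero : j.choose (m - l) = 0 := Nat.choose_eq_zero_of_lt (by omega)
      simp [degreeCoeff, hzero, show l ≠ m by omega]
  rw [sum_comm, sum_congr rfl hl, sum_ite_eq' (range (m + 1)) m, if_pos (self_mem_range_succ m)]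

theorem abs_degreeCoeff_le (m j k l : ℕ) :
    |degreeCoeff m j k l| ≤ 2 ^ (m + k + l) * 4 ^ j := by
  have hbound : m.choose k * (j + k + l - m).choose l * j.choose (m - l) ≤
      2 ^ m * 2 ^ (j + k + l) * 2 ^ j := by
    gcongr
    · exact Nat.choose_le_two_pow _ _
    · exact (Nat.choose_le_two_pow _ _).trans (Nat.pow_le_pow_right two_pos (by omega))
    · exact Nat.choose_le_two_pow _ _
  rw [degreeCoeff, abs_mul, abs_pow, abs_neg, abs_one, one_pow, one_mul, Nat.abs_cast]
  calc _ ≤ ((2 ^ m * 2 ^ (j + k + l) * 2 ^ j : ℕ) : ℤ) := by exact_mod_cast hbound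
    _ = 2 ^ (m + k + l) * 4 ^ j := by
      push_cast
      rw [show (4 : ℤ) = 2 ^ 2 by norm_num, ← pow_mul]
      ring

theorem summable_mul_pow_div_factorial {c : ℕ → ℝ} {C b : ℝ} (hc : ∀ j, |c j| ≤ C * b ^ j)
    (x : ℝ) : Summable fun j => c j * (x ^ j / j !) := by
  refine ((Real.summable_pow_div_factorial (b * |x|)).mul_left C).of_norm_bounded fun j => ?_
  rw [Real.norm_eq_abs, abs_mul, abs_div, abs_pow, Nat.abs_cast, mul_pow, mul_div_assoc,
    ← mul_assoc]
  gcongr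
  exact hc j

theorem summable_degreeCoeff_mul (m k l : ℕ) (r : ℝ) :
    Summable fun j => (degreeCoeff m j k l : ℝ) * (r ^ j / j !) :=
  summable_mul_pow_div_factorial (C := 2 ^ (m + k + l)) (b := 4)
    (fun j => by exact_mod_cast abs_degreeCoeff_le m j k l) r

theorem hasSum_iff_hasSum_of_shift {α : Type*} [AddCommMonoid α] [TopologicalSpace α]
    {f g : ℕ → α} {p q : ℕ} (hf : ∀ n < p, f n = 0) (hg : ∀ n < q, g n = 0)
    (hfg : ∀ i, f (i + p) = g (i + q)) {a : α} : HasSum f a ↔ HasSum g a := by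
  have hshift : ∀ {h : ℕ → α} {p : ℕ}, (∀ n < p, h n = 0) →
      (HasSum (fun i => h (i + p)) a ↔ HasSum h a) := fun {h p} hh =>
    (add_left_injective p).hasSum_iff fun n hn =>
      hh n (not_le.mp fun hpn => hn ⟨n - p, Nat.sub_add_cancel hpn⟩)
  rw [← hshift hf, ← hshift hg, funext hfg]

noncomputable def hermiteCoeff (ν : ℝ) (m n k : ℕ) : ℝ :=
  (-1) ^ k * m ! * n ! * ν ^ (m + n - k) / (k ! * (m - k)! * (n - k)!)

theorem cHermite_eq_sum_hermiteCoeff (ν : ℝ) (m n : ℕ) (z : ℂ) :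
    cHermite ν m n z = ∑ k ∈ range (min m n + 1),
      (hermiteCoeff ν m n k : ℂ) * (z ^ (m - k) * conj z ^ (n - k)) := by
  rw [cHermite, mul_sum]
  refine sum_congr rfl fun k _ => ?_
  simp only [hermiteCoeff]
  push_cast
  ring

theorem monomial_mul_conj_monomial (z : ℂ) {a b c d e : ℕ} (had : a + d = e) (hbc : b + c = e) :
    z ^ a * conj z ^ b * conj (z ^ c * conj z ^ d) = ((‖z‖ : ℂ) ^ 2) ^ e := by
  rw [map_mul, map_pow, map_pow, conj_conj,
    show z ^ a * conj z ^ b * (conj z ^ c * z ^ d) = z ^ (a + d) * conj z ^ (b + c) by ring,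
    had, hbc, ← mul_pow, mul_conj']

theorem sq_norm_cHermite (ν : ℝ) (m n : ℕ) (z : ℂ) :
    ‖cHermite ν m n z‖ ^ 2 = ∑ k ∈ range (min m n + 1), ∑ l ∈ range (min m n + 1),
      hermiteCoeff ν m n k * hermiteCoeff ν m n l * (‖z‖ ^ 2) ^ (m + n - k - l) := by
  apply ofReal_injective
  rw [ofReal_pow, ← mul_conj', cHermite_eq_sum_hermiteCoeff, map_sum, sum_mul_sum]
  push_cast
  refine sum_congr rfl fun k hk => sum_congr rfl fun l hl => ?_
  simp only [mem_range] at hk hl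
  rw [map_mul, conj_ofReal, mul_mul_mul_comm,
    monomial_mul_conj_monomial z (e := m + n - k - l) (by omega) (by omega)]

noncomputable def hermiteTerm (r : ℝ) (m n k l : ℕ) : ℝ :=
  (-1) ^ (k + l) * (m.choose k * n.choose l * (m + n - k - l).choose (m - l) : ℕ) *
    (r ^ (m + n - k - l) / (m + n - k - l)!)

theorem hermiteCoeff_mul_hermiteCoeff_div {ν : ℝ} (hν : ν ≠ 0) {m n k l : ℕ}
    (hk : k ≤ min m n) (hl : l ≤ min m n) (s : ℝ) :
    hermiteCoeff ν m n k * hermiteCoeff ν m n l * s ^ (m + n - k - l) /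
      (ν ^ (m + n) * m ! * n !) = hermiteTerm (ν * s) m n k l := by
  have hkm : k ≤ m := hk.trans (min_le_left m n)
  have hln : l ≤ n := hl.trans (min_le_right m n)
  have hν' : ν ^ (m + n - k) * ν ^ (m + n - l) = ν ^ (m + n) * ν ^ (m + n - k - l) := by
    rw [← pow_add, ← pow_add]; congr 1; omega
  have hj : m + n - k - l - (m - l) = n - k := by omega
  simp only [hermiteCoeff, hermiteTerm]
  push_cast
  rw [Nat.cast_choose ℝ hkm, Nat.cast_choose ℝ hln,
    Nat.cast_choose ℝ (show m - l ≤ m + n - k - l by omega), hj, mul_pow]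
  field_simp
  linear_combination (-1) ^ k * (-1) ^ l * s ^ (m + n - k - l) * hν'

theorem hermiteTerm_eq_zero_of_lt {r : ℝ} {m n k l : ℕ} (h : n < k ∨ n < l) :
    hermiteTerm r m n k l = 0 := by
  rcases h with hk | hl
  · by_cases hkm : k ≤ m
    · by_cases hln : l ≤ n
      · simp [hermiteTerm, Nat.choose_eq_zero_of_lt (show m + n - k - l < m - l by omega)]
      · simp [hermiteTerm, Nat.choose_eq_zero_of_lt (show n < l by omega)]
    · simp [hermiteTerm, Nat.choose_eq_zero_of_lt (show m < k by omega)]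
  · simp [hermiteTerm, Nat.choose_eq_zero_of_lt hl]

theorem sq_norm_cHermite_div_eq_sum {ν : ℝ} (hν : ν ≠ 0) (m n : ℕ) (z : ℂ) :
    ‖cHermite ν m n z‖ ^ 2 / (ν ^ (m + n) * m ! * n !) =
      ∑ k ∈ range (m + 1), ∑ l ∈ range (m + 1), hermiteTerm (ν * ‖z‖ ^ 2) m n k l := by
  have hsub : range (min m n + 1) ⊆ range (m + 1) :=
    range_subset_range.mpr (Nat.succ_le_succ (min_le_left m n))
  simp_rw [sq_norm_cHermite, sum_div]
  rw [← sum_product', ← sum_product']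
  refine sum_subset_zero_on_sdiff (product_subset_product hsub hsub) (fun p hp => ?_)
    (fun p hp => ?_)
  · simp only [mem_sdiff, mem_product, mem_range] at hp
    exact hermiteTerm_eq_zero_of_lt (by omega)
  · simp only [mem_product, mem_range] at hp
    exact hermiteCoeff_mul_hermiteCoeff_div hν (by omega) (by omega) _

theorem hermiteTerm_add_eq_degreeCoeff_mul (r : ℝ) {m l : ℕ} (hl : l ≤ m) (k i : ℕ) :
    hermiteTerm r m (i + k) k l =
      degreeCoeff m (i + (m - l)) k l * (r ^ (i + (m - l)) / (i + (m - l))!) := by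
  have hj : m + (i + k) - k - l = i + (m - l) := by omega
  have hn : i + (m - l) + k + l - m = i + k := by omega
  simp only [hermiteTerm, degreeCoeff, hj, hn]
  push_cast
  ring

theorem hasSum_sq_norm_cHermite_div {ν : ℝ} (hν : ν ≠ 0) (z : ℂ) (m : ℕ) :
    HasSum (fun n => ‖cHermite ν m n z‖ ^ 2 / (ν ^ (m + n) * m ! * n !))
      (Real.exp (ν * ‖z‖ ^ 2)) := by
  set r := ν * ‖z‖ ^ 2
  have hdegree : HasSum (fun j => ∑ k ∈ range (m + 1), ∑ l ∈ range (m + 1),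
      (degreeCoeff m j k l : ℝ) * (r ^ j / j !))
      (∑ k ∈ range (m + 1), ∑ l ∈ range (m + 1),
        ∑' j, (degreeCoeff m j k l : ℝ) * (r ^ j / j !)) :=
    hasSum_sum fun k _ => hasSum_sum fun l _ => (summable_degreeCoeff_mul m k l r).hasSum
  simp_rw [← sum_mul, ← Int.cast_sum, sum_degreeCoeff, Int.cast_one, one_mul] at hdegree
  have hexp := hdegree.unique (Real.exp_eq_exp_ℝ ▸ NormedSpace.expSeries_div_hasSum_exp r)
  simp_rw [sq_norm_cHermite_div_eq_sum hν, ← hexp]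
  refine hasSum_sum fun k _ => hasSum_sum fun l hl => ?_
  refine (hasSum_iff_hasSum_of_shift (p := k) (q := m - l) (fun n hn => ?_) (fun j hj => ?_)
    (hermiteTerm_add_eq_degreeCoeff_mul r (Nat.lt_succ_iff.mp (mem_range.mp hl)) k)).mpr
    (summable_degreeCoeff_mul m k l r).hasSum
  · exact hermiteTerm_eq_zero_of_lt (Or.inl hn)
  · simp [degreeCoeff, Nat.choose_eq_zero_of_lt hj]

theorem first_mehler_formula_diagonal (ν : ℝ) (hν : 0 < ν) (u : ℝ) (hu : |u| < 1) (z : ℂ) :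
    ∑' p : ℕ × ℕ, u ^ p.1 * ‖cHermite ν p.1 p.2 z‖ ^ 2 /
        (ν ^ (p.1 + p.2) * (p.1.factorial : ℝ) * (p.2.factorial : ℝ))
      = Real.exp (ν * ‖z‖ ^ 2) / (1 - u) := by
  set g : ℕ → ℕ → ℝ := fun m n => ‖cHermite ν m n z‖ ^ 2 / (ν ^ (m + n) * m ! * n !)
  set e := Real.exp (ν * ‖z‖ ^ 2)
  have hrow : ∀ m, HasSum (g m) e := hasSum_sq_norm_cHermite_div hν.ne' z
  have hfiber : ∀ m, HasSum (fun n => u ^ m * g m n) (u ^ m * e) :=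
    fun m => (hrow m).mul_left _
  have hsummable : Summable fun p : ℕ × ℕ => u ^ p.1 * g p.1 p.2 := by
    refine Summable.of_norm ((summable_prod_of_nonneg fun _ => norm_nonneg _).mpr
      ⟨fun m => (hfiber m).summable.norm, ?_⟩)
    have hg : ∀ m n, 0 ≤ g m n := fun m n => by positivity
    simp_rw [norm_mul, norm_pow, Real.norm_of_nonneg (hg _ _), tsum_mul_left, (hrow _).tsum_eq]
    exact (summable_geometric_of_lt_one (abs_nonneg u) hu).mul_right _
  have hgeom : HasSum (fun m => u ^ m * e) (e / (1 - u)) := by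
    rw [div_eq_inv_mul]
    exact (hasSum_geometric_of_abs_lt_one hu).mul_right _
  simp_rw [mul_div_assoc]
  exact (hsummable.hasSum.prod_fiberwise hfiber).unique hgeom
end

section
/- For ν > 0, the squared norm of H_{m,n}^ν in L²(ℂ, e^{-ν|z|²} dλ) equals (π/ν) ν^{m+n} m! n!, i.e., ∫_ℂ |H_{m,n}^ν(z, z̄)|² e^{-ν|z|²} dλ(z) = (π/ν) ν^{m+n} m! n!. -/
open scoped Real
open MeasureTheory Complex

/-!
Expanding `H_{m,n}^ν = m! n! ∑_k w_k ν^{m+n-k} z^{m-k} z̄^{n-k}` with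
`w_k = (-1)^k / (k! (m-k)! (n-k)!)`, the product of any monomial of the sum with the conjugate
of another is radial, `|z|^{2(m+n-k-l)}`. The Gaussian moments
`∫ (ν|z|²)^N e^{-ν|z|²} dλ = (π/ν) N!` therefore reduce the integral to
`(m! n!)² ν^{m+n} (π/ν) ∑_{k,l} w_k w_l (m+n-k-l)!`. After `l ↦ m - l` (for `m ≤ n`) the inner
sum over `l` is, up to a factor, the `m`-th forward difference of `x ↦ C(x, m-k)`, a polynomial of
degree `m - k`; it vanishes unless `k = 0`, leaving `w_0 = 1 / (m! n!)`.
-/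

open Finset
open scoped Nat ComplexConjugate

theorem sum_range_alternating_choose_mul_choose_add {m b : ℕ} (hb : b ≤ m) (y : ℕ) :
    ∑ j ∈ range (m + 1), (-1 : ℤ) ^ (m - j) * m.choose j * (y + j).choose b
      = if b = m then 1 else 0 := by
  have h := fwdDiff_iter_eq_sum_shift (1 : ℕ) (fun x => (x.choose b : ℤ)) m y
  simp only [smul_eq_mul, mul_one] at h
  rw [← h]
  obtain ⟨d, rfl⟩ := Nat.exists_eq_add_of_le' hb
  have hchoose := fwdDiff_iter_choose 0 b
  rw [add_zero] at hchoose
  rw [Function.iterate_add_apply, hchoose]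
  rcases d with _ | d
  · simp
  · rw [Function.iterate_succ_apply]
    simp [fwdDiff_const, fwdDiff_iter_eq_sum_shift]

noncomputable def cHermiteWeight (m n k : ℕ) : ℝ := (-1) ^ k / (k ! * (m - k)! * (n - k)!)

theorem cHermiteWeight_comm (m n k : ℕ) : cHermiteWeight m n k = cHermiteWeight n m k := by
  simp only [cHermiteWeight, mul_right_comm]

theorem sum_cHermiteWeight_mul_factorial_of_le {m n k : ℕ} (hmn : m ≤ n) (hk : k ≤ m) :
    ∑ l ∈ range (m + 1), cHermiteWeight m n l * ((m + n - k - l)! : ℝ)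
      = if k = 0 then 1 else 0 := by
  have hterm : ∀ j ∈ range (m + 1),
      cHermiteWeight m n (m + 1 - 1 - j) * ((m + n - k - (m + 1 - 1 - j))! : ℝ)
        = (m - k)! / m ! *
          (((-1 : ℤ) ^ (m - j) * m.choose j * (n - k + j).choose (m - k) : ℤ) : ℝ) := by
    intro j hj
    have hjm : j ≤ m := Nat.lt_succ_iff.mp (mem_range.mp hj)
    rw [show m + 1 - 1 - j = m - j by omega, show m + n - k - (m - j) = n - k + j by omega,
      cHermiteWeight, show m - (m - j) = j by omega, show n - (m - j) = n - m + j by omega]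
    push_cast
    rw [Nat.cast_choose ℝ hjm, Nat.cast_choose ℝ (by omega : m - k ≤ n - k + j),
      show n - k + j - (m - k) = n - m + j by omega]
    field_simp
  rw [← sum_range_reflect, sum_congr rfl hterm, ← mul_sum, ← Int.cast_sum,
    sum_range_alternating_choose_mul_choose_add (Nat.sub_le m k)]
  rcases Nat.eq_zero_or_pos k with rfl | hk0
  · simp [Nat.factorial_ne_zero]
  · simp [show m - k ≠ m by omega, hk0.ne']

theorem sum_cHermiteWeight_mul_factorial {m n k : ℕ} (hk : k ≤ min m n) :
    ∑ l ∈ range (min m n + 1), cHermiteWeight m n l * ((m + n - k - l)! : ℝ)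
      = if k = 0 then 1 else 0 := by
  rcases le_total m n with h | h
  · rw [min_eq_left h] at hk ⊢
    exact sum_cHermiteWeight_mul_factorial_of_le h hk
  · rw [min_eq_right h] at hk ⊢
    simp_rw [cHermiteWeight_comm m n, add_comm m n]
    exact sum_cHermiteWeight_mul_factorial_of_le h hk

theorem sum_sum_cHermiteWeight_mul_factorial (m n : ℕ) :
    ∑ k ∈ range (min m n + 1), ∑ l ∈ range (min m n + 1),
      cHermiteWeight m n k * cHermiteWeight m n l * ((m + n - k - l)! : ℝ)
      = 1 / (m ! * n !) := by
  calc _ = ∑ k ∈ range (min m n + 1), cHermiteWeight m n k * if k = 0 then 1 else 0 := by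
        refine sum_congr rfl fun k hk => ?_
        rw [← sum_cHermiteWeight_mul_factorial (Nat.lt_succ_iff.mp (mem_range.mp hk)), mul_sum]
        simp only [mul_assoc]
    _ = 1 / (m ! * n !) := by simp [cHermiteWeight]

theorem integral_mul_norm_sq_pow_mul_exp_neg {ν : ℝ} (hν : 0 < ν) (N : ℕ) :
    ∫ z : ℂ, (ν * ‖z‖ ^ 2) ^ N * Real.exp (-ν * ‖z‖ ^ 2) = π / ν * N ! := by
  have h := Complex.integral_rpow_mul_exp_neg_mul_rpow (p := 2) (q := 2 * N) one_le_two
    (by linarith [N.cast_nonneg (α := ℝ)]) hν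
  have hq : (2 * N + 2 : ℝ) / 2 = N + 1 := by ring
  simp only [Real.rpow_two, neg_div, hq, Real.Gamma_nat_eq_factorial, Real.rpow_neg hν.le,
    Real.rpow_add_one hν.ne', Real.rpow_natCast, Real.rpow_mul_natCast (norm_nonneg _)] at h
  simp_rw [mul_pow, mul_assoc, integral_const_mul, h]
  field_simp

theorem integrable_mul_norm_sq_pow_mul_exp_neg {ν : ℝ} (hν : 0 < ν) (N : ℕ) :
    Integrable fun z : ℂ => (ν * ‖z‖ ^ 2) ^ N * Real.exp (-ν * ‖z‖ ^ 2) := by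
  refine Integrable.of_integral_ne_zero ?_
  rw [integral_mul_norm_sq_pow_mul_exp_neg hν]
  positivity

theorem integral_sum_mul_norm_sq_pow_mul_exp_neg {ν : ℝ} (hν : 0 < ν) {ι : Type*}
    (s : Finset ι) (c : ι → ℝ) (N : ι → ℕ) :
    ∫ z : ℂ, (∑ i ∈ s, c i * (ν * ‖z‖ ^ 2) ^ N i) * Real.exp (-ν * ‖z‖ ^ 2)
      = π / ν * ∑ i ∈ s, c i * (N i)! := by
  simp_rw [sum_mul, mul_assoc]
  rw [integral_finsetSum _ fun i _ => (integrable_mul_norm_sq_pow_mul_exp_neg hν _).const_mul _,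
    mul_sum]
  simp_rw [integral_const_mul, integral_mul_norm_sq_pow_mul_exp_neg hν, mul_left_comm]

theorem pow_mul_conj_pow_mul_conj_pow_mul_pow (z : ℂ) {a b c d : ℕ} (h : a + d = b + c) :
    z ^ a * conj z ^ b * conj (z ^ c * conj z ^ d) = ((‖z‖ ^ 2) ^ (a + d) : ℝ) := by
  rw [map_mul, map_pow, map_pow, conj_conj, Complex.ofReal_pow, Complex.ofReal_pow,
    ← Complex.mul_conj', mul_pow]
  calc _ = z ^ (a + d) * conj z ^ (b + c) := by ring
    _ = _ := by rw [h]

theorem cHermite_eq_sum (ν : ℝ) (m n : ℕ) (z : ℂ) :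
    cHermite ν m n z = (m ! * n ! : ℂ) * ∑ k ∈ range (min m n + 1),
      ((cHermiteWeight m n k * ν ^ (m + n - k) : ℝ) : ℂ) * (z ^ (m - k) * conj z ^ (n - k)) := by
  unfold cHermite cHermiteWeight
  push_cast
  congr 1
  refine sum_congr rfl fun k _ => ?_
  ring

theorem norm_sq_cHermite (ν : ℝ) (m n : ℕ) (z : ℂ) :
    ‖cHermite ν m n z‖ ^ 2 = (m ! * n !) ^ 2 * ν ^ (m + n) *
      ∑ k ∈ range (min m n + 1), ∑ l ∈ range (min m n + 1),
        cHermiteWeight m n k * cHermiteWeight m n l * (ν * ‖z‖ ^ 2) ^ (m + n - k - l) := by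
  have hterm : ∀ k ∈ range (min m n + 1), ∀ l ∈ range (min m n + 1),
      ((cHermiteWeight m n k * ν ^ (m + n - k) : ℝ) : ℂ) * (z ^ (m - k) * conj z ^ (n - k)) *
        conj (((cHermiteWeight m n l * ν ^ (m + n - l) : ℝ) : ℂ) *
          (z ^ (m - l) * conj z ^ (n - l)))
      = ((ν ^ (m + n) * (cHermiteWeight m n k * cHermiteWeight m n l *
          (ν * ‖z‖ ^ 2) ^ (m + n - k - l)) : ℝ) : ℂ) := by
    intro k hk l hl
    have hk := Nat.lt_succ_iff.mp (mem_range.mp hk)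
    have hl := Nat.lt_succ_iff.mp (mem_range.mp hl)
    have hkm := hk.trans (min_le_left m n)
    have hkn := hk.trans (min_le_right m n)
    have hlm := hl.trans (min_le_left m n)
    have hln := hl.trans (min_le_right m n)
    have hν : ν ^ (m + n - k) * ν ^ (m + n - l) = ν ^ (m + n) * ν ^ (m + n - k - l) := by
      rw [← pow_add, ← pow_add]; congr 1; omega
    rw [map_mul, conj_ofReal, mul_mul_mul_comm,
      pow_mul_conj_pow_mul_conj_pow_mul_pow z (by omega : m - k + (n - l) = n - k + (m - l)),
      ← ofReal_mul, ← ofReal_mul, show m - k + (n - l) = m + n - k - l by omega]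
    congr 1
    calc _ = cHermiteWeight m n k * cHermiteWeight m n l * (ν ^ (m + n - k) * ν ^ (m + n - l)) *
          (‖z‖ ^ 2) ^ (m + n - k - l) := by ring
      _ = _ := by rw [hν, mul_pow]; ring
  apply ofReal_injective
  rw [ofReal_pow, ← mul_conj', cHermite_eq_sum, map_mul, mul_mul_mul_comm, map_sum, sum_mul_sum,
    sum_congr rfl fun k hk => sum_congr rfl fun l hl => hterm k hk l hl]
  simp only [map_mul, map_natCast]
  push_cast
  simp only [mul_sum, sq]
  exact sum_congr rfl fun _ _ => sum_congr rfl fun _ _ => by ring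

theorem cHermite_norm_squared (ν : ℝ) (hν : 0 < ν) (m n : ℕ) :
    ∫ z : ℂ, ‖cHermite ν m n z‖ ^ 2 * Real.exp (-ν * ‖z‖ ^ 2)
      = (π / ν) * ν ^ (m + n) * (m.factorial : ℝ) * (n.factorial : ℝ) := by
  have h := integral_sum_mul_norm_sq_pow_mul_exp_neg hν (range (min m n + 1) ×ˢ range (min m n + 1))
    (fun p => cHermiteWeight m n p.1 * cHermiteWeight m n p.2) (fun p => m + n - p.1 - p.2)
  simp only [sum_product] at h
  calc _ = (m ! * n !) ^ 2 * ν ^ (m + n) * ∫ z : ℂ,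
        (∑ k ∈ range (min m n + 1), ∑ l ∈ range (min m n + 1),
          cHermiteWeight m n k * cHermiteWeight m n l * (ν * ‖z‖ ^ 2) ^ (m + n - k - l)) *
        Real.exp (-ν * ‖z‖ ^ 2) := by
        rw [← integral_const_mul]
        simp only [norm_sq_cHermite, mul_assoc]
    _ = (m ! * n !) ^ 2 * ν ^ (m + n) * (π / ν * (1 / (m ! * n !))) := by
        rw [h, sum_sum_cHermiteWeight_mul_factorial]
    _ = _ := by field_simp
end

section
/- For ν > 0, the complex Hermite polynomial H_{m,n}^ν(z, z̄) is an eigenfunction of the magnetic Laplacian Δ_ν = -∂²/(∂z ∂z̄) + ν z ∂/∂z with eigenvalue ν m, i.e., Δ_ν H_{m,n}^ν = ν m H_{m,n}^ν. -/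
open scoped Real
open MeasureTheory Complex

/-- Polarized complex Hermite polynomial: the same formula with `w` in place of `z̄`,
so that the Wirtinger derivatives `∂/∂z`, `∂/∂z̄` become ordinary derivatives in the
first and second slot respectively. -/
noncomputable def cHermite2 (ν : ℝ) (m n : ℕ) (z w : ℂ) : ℂ :=
  (m.factorial : ℂ) * (n.factorial : ℂ) *
    ∑ k ∈ Finset.range (min m n + 1),
      (-1 : ℂ) ^ k * (ν : ℂ) ^ (m + n - k) * z ^ (m - k) * w ^ (n - k) /
        ((k.factorial : ℂ) * ((m - k).factorial : ℂ) * ((n - k).factorial : ℂ))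

/-- `Δ_ν = -∂²/∂z∂z̄ + ν z ∂/∂z`, with `w` in place of `z̄` as in `cHermite2`. -/
noncomputable def magneticLaplacian (ν : ℂ) (f : ℂ → ℂ → ℂ) (z w : ℂ) : ℂ :=
  -deriv (fun t => deriv (fun s => f t s) w) z + ν * z * deriv (fun t => f t w) z

noncomputable def diagPoly (c : ℕ → ℂ) (N m n : ℕ) (z w : ℂ) : ℂ :=
  ∑ k ∈ Finset.range (N + 1), c k * z ^ (m - k) * w ^ (n - k)

lemma hasDerivAt_sum_mul_pow_mul (s : Finset ℕ) (a b : ℕ → ℂ) (p : ℕ → ℕ) (z : ℂ) :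
    HasDerivAt (fun t => ∑ k ∈ s, a k * t ^ p k * b k)
      (∑ k ∈ s, a k * ((p k : ℂ) * z ^ (p k - 1)) * b k) z :=
  HasDerivAt.fun_sum fun k _ => ((hasDerivAt_pow (p k) z).const_mul (a k)).mul_const (b k)

lemma mul_natCast_mul_pow_sub_one (z : ℂ) (p : ℕ) : z * ((p : ℂ) * z ^ (p - 1)) = p * z ^ p := by
  rcases p with _ | p
  · simp
  · rw [Nat.add_sub_cancel, pow_succ]
    ring

section diagPoly

variable (c : ℕ → ℂ) (N m n : ℕ)

lemma mul_deriv_diagPoly_fst (z w : ℂ) :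
    z * deriv (fun t => diagPoly c N m n t w) z
      = ∑ k ∈ Finset.range (N + 1), ((m - k : ℕ) : ℂ) * (c k * z ^ (m - k) * w ^ (n - k)) := by
  unfold diagPoly
  rw [(hasDerivAt_sum_mul_pow_mul _ c (fun k => w ^ (n - k)) (fun k => m - k) z).deriv,
    Finset.mul_sum]
  refine Finset.sum_congr rfl fun k _ => ?_
  linear_combination c k * w ^ (n - k) * mul_natCast_mul_pow_sub_one z (m - k)

lemma deriv_deriv_diagPoly (z w : ℂ) :
    deriv (fun t => deriv (fun s => diagPoly c N m n t s) w) z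
      = ∑ k ∈ Finset.range (N + 1),
          (((m - k) * (n - k) : ℕ) : ℂ) * c k * z ^ (m - (k + 1)) * w ^ (n - (k + 1)) := by
  have hsnd : (fun t => deriv (fun s => diagPoly c N m n t s) w) = fun t =>
      ∑ k ∈ Finset.range (N + 1), c k * t ^ (m - k) * ((n - k : ℕ) * w ^ (n - k - 1)) := by
    funext t
    simpa only [diagPoly, mul_one] using (hasDerivAt_sum_mul_pow_mul (Finset.range (N + 1))
      (fun k => c k * t ^ (m - k)) (fun _ => 1) (fun k => n - k) w).deriv
  rw [hsnd, (hasDerivAt_sum_mul_pow_mul _ c _ (fun k => m - k) z).deriv]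
  refine Finset.sum_congr rfl fun k _ => ?_
  rw [Nat.sub_sub, Nat.sub_sub]
  push_cast
  ring

theorem magneticLaplacian_diagPoly (ν : ℂ) (hNm : N ≤ m) (hN : (m - N) * (n - N) = 0)
    (hc : ∀ k < N, ν * (k + 1) * c (k + 1) = -(((m - k) * (n - k) : ℕ) : ℂ) * c k) (z w : ℂ) :
    magneticLaplacian ν (diagPoly c N m n) z w = ν * m * diagPoly c N m n z w := by
  have hmixed : deriv (fun t => deriv (fun s => diagPoly c N m n t s) w) z
      = -∑ k ∈ Finset.range (N + 1), ν * k * (c k * z ^ (m - k) * w ^ (n - k)) := by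
    rw [deriv_deriv_diagPoly, Finset.sum_range_succ, hN, Finset.sum_range_succ']
    simp only [Nat.cast_zero, zero_mul, mul_zero, add_zero]
    rw [← Finset.sum_neg_distrib]
    refine Finset.sum_congr rfl fun k hk => ?_
    rw [Nat.cast_add_one]
    linear_combination z ^ (m - (k + 1)) * w ^ (n - (k + 1)) * hc k (Finset.mem_range.mp hk)
  rw [magneticLaplacian, hmixed, mul_assoc, mul_deriv_diagPoly_fst, diagPoly, neg_neg,
    Finset.mul_sum, Finset.mul_sum, ← Finset.sum_add_distrib]
  refine Finset.sum_congr rfl fun k hk => ?_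
  rw [Nat.cast_sub (by have := Finset.mem_range.mp hk; omega)]
  ring

end diagPoly

noncomputable def cHermiteCoeff (ν : ℝ) (m n k : ℕ) : ℂ :=
  (m.factorial : ℂ) * (n.factorial : ℂ) * (-1 : ℂ) ^ k * (ν : ℂ) ^ (m + n - k) /
    ((k.factorial : ℂ) * ((m - k).factorial : ℂ) * ((n - k).factorial : ℂ))

lemma cHermite2_eq_diagPoly (ν : ℝ) (m n : ℕ) :
    cHermite2 ν m n = diagPoly (cHermiteCoeff ν m n) (min m n) m n := by
  funext z w
  rw [cHermite2, diagPoly, Finset.mul_sum]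
  refine Finset.sum_congr rfl fun k _ => ?_
  rw [cHermiteCoeff]
  ring

lemma cHermiteCoeff_succ (ν : ℝ) {m n k : ℕ} (hk : k < min m n) :
    (ν : ℂ) * (k + 1) * cHermiteCoeff ν m n (k + 1)
      = -(((m - k) * (n - k) : ℕ) : ℂ) * cHermiteCoeff ν m n k := by
  obtain ⟨a, ha⟩ : ∃ a, m - k = a + 1 := ⟨m - (k + 1), by omega⟩
  obtain ⟨b, hb⟩ : ∃ b, n - k = b + 1 := ⟨n - (k + 1), by omega⟩
  rw [cHermiteCoeff, cHermiteCoeff, ha, hb, show m - (k + 1) = a by omega,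
    show n - (k + 1) = b by omega, show m + n - k = m + n - (k + 1) + 1 by omega]
  simp only [Nat.factorial_succ, pow_succ]
  push_cast
  field_simp

theorem cHermite_eigenfunction_general (ν : ℝ) (m n : ℕ) (z w : ℂ) :
    -(deriv (fun t : ℂ => deriv (fun s : ℂ => cHermite2 ν m n t s) w) z) +
        (ν : ℂ) * z * deriv (fun t : ℂ => cHermite2 ν m n t w) z
      = (ν : ℂ) * (m : ℂ) * cHermite2 ν m n z w := by
  change magneticLaplacian ν (cHermite2 ν m n) z w = ν * m * cHermite2 ν m n z w
  rw [cHermite2_eq_diagPoly]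
  exact magneticLaplacian_diagPoly _ _ m n ν (min_le_left m n) (Nat.mul_eq_zero.mpr (by omega))
    (fun k hk => cHermiteCoeff_succ ν hk) z w

theorem cHermite_eigenfunction (ν : ℝ) (hν : 0 < ν) (m n : ℕ) (z w : ℂ) :
    -(deriv (fun t : ℂ => deriv (fun s : ℂ => cHermite2 ν m n t s) w) z) +
        (ν : ℂ) * z * deriv (fun t : ℂ => cHermite2 ν m n t w) z
      = (ν : ℂ) * (m : ℂ) * cHermite2 ν m n z w :=
  cHermite_eigenfunction_general ν m n z w
end
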